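/- arXiv:2003.06766 — 4 statements merged into one kernel-verified Lean document; each statement's English description precedes it below -/
import Mathlib

section
/- Consider the single homogeneous Diophantine equation a_1 x_1 + ... + a_m x_m = b_1 y_1 + ... + b_n y_n where all a_i and b_j are positive integers. Every minimal nonzero solution (x,y) in nonnegative integers satisfies x_i ≤ b_1 + ... + b_n for all i and y_j ≤ a_1 + ... + a_m for all j. -/
open Finset

/-- Prefix sums `∑_{i<j} b i * y i`. -/
def Cc (b y : ℕ → ℕ) (j : ℕ) : ℕ := ∑ i ∈ Finset.range j, b i * y i

/-- Greedy amount of item `j` used to (approximately) reach total `s`. -/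
def uu (b y : ℕ → ℕ) (s j : ℕ) : ℕ :=
  min (y j) ((s - Cc b y j + (b j - 1)) / b j)

lemma Cc_succ (b y : ℕ → ℕ) (j : ℕ) : Cc b y (j+1) = Cc b y j + b j * y j :=
  Finset.sum_range_succ _ _

lemma Cc_mono (b y : ℕ → ℕ) {j k : ℕ} (h : j ≤ k) : Cc b y j ≤ Cc b y k :=
  Finset.sum_le_sum_of_subset (Finset.range_subset_range.2 h)

lemma ceil_bounds {bj : ℕ} (hb : 0 < bj) (d : ℕ) :
    d ≤ bj * ((d + (bj - 1)) / bj) ∧ bj * ((d + (bj - 1)) / bj) ≤ d + (bj - 1) := by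
  have h1 := Nat.div_add_mod (d + (bj - 1)) bj
  have h2 := Nat.mod_lt (d + (bj - 1)) hb
  omega

lemma uu_le (b y : ℕ → ℕ) (s j : ℕ) : uu b y s j ≤ y j := min_le_left _ _

lemma uu_mono (b y : ℕ → ℕ) {s1 s2 : ℕ} (h : s1 ≤ s2) (j : ℕ) :
    uu b y s1 j ≤ uu b y s2 j := by
  exact min_le_min le_rfl (Nat.div_le_div_right (by omega))

lemma uu_full (b y : ℕ → ℕ) {s j : ℕ} (hb : 0 < b j) (h : Cc b y (j+1) ≤ s) :
    uu b y s j = y j := by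
  have hC := Cc_succ b y j
  have hcomm : y j * b j = b j * y j := mul_comm _ _
  exact min_eq_left ((Nat.le_div_iff_mul_le hb).2 (by omega))

lemma uu_sum_full (b y : ℕ → ℕ) {n s : ℕ} (hb : ∀ i, i < n → 0 < b i)
    (hs : Cc b y n ≤ s) :
    ∑ j ∈ Finset.range n, b j * uu b y s j = Cc b y n := by
  refine Finset.sum_congr rfl (fun j hj => ?_)
  rw [Finset.mem_range] at hj
  rw [uu_full b y (hb j hj) (le_trans (Cc_mono b y (by omega)) hs)]

lemma uu_lower (b y : ℕ → ℕ) : ∀ (n s : ℕ), (∀ i, i < n → 0 < b i) →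
    s ≤ Cc b y n → s ≤ ∑ j ∈ Finset.range n, b j * uu b y s j := by
  intro n
  induction n with
  | zero => intro s _ hs; simpa [Cc] using hs
  | succ n ih =>
    intro s hb hs
    rw [Finset.sum_range_succ]
    by_cases hsn : s ≤ Cc b y n
    · exact le_trans (ih s (fun i hi => hb i (by omega)) hsn) (Nat.le_add_right _ _)
    · push_neg at hsn
      rw [uu_sum_full b y (fun i hi => hb i (by omega)) (le_of_lt hsn)]
      have hceil := (ceil_bounds (hb n (by omega)) (s - Cc b y n)).1
      have hC := Cc_succ b y n
      rcases le_total (y n) ((s - Cc b y n + (b n - 1)) / b n) with h | h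
      · rw [show uu b y s n = y n from min_eq_left h]; omega
      · rw [show uu b y s n = (s - Cc b y n + (b n - 1)) / b n from min_eq_right h]; omega

lemma uu_upper (b y : ℕ → ℕ) : ∀ (n s : ℕ), (∀ i, i < n → 0 < b i) →
    ∑ j ∈ Finset.range n, b j * uu b y s j ≤ s + ((∑ j ∈ Finset.range n, b j) - 1) := by
  intro n
  induction n with
  | zero => intro s _; simp
  | succ n ih =>
    intro s hb
    rw [Finset.sum_range_succ, Finset.sum_range_succ b n]
    have hbn := hb n (by omega)
    by_cases hu : uu b y s n = 0
    · have h1 := ih s (fun i hi => hb i (by omega))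
      rw [hu]
      omega
    · have hq : 0 < (s - Cc b y n + (b n - 1)) / b n :=
        lt_of_lt_of_le (Nat.pos_of_ne_zero hu) (min_le_right _ _)
      have hq' : b n ≤ s - Cc b y n + (b n - 1) := (Nat.one_le_div_iff hbn).1 hq
      have hCn : Cc b y n < s := by omega
      rw [uu_sum_full b y (fun i hi => hb i (by omega)) (le_of_lt hCn)]
      have hceil := (ceil_bounds hbn (s - Cc b y n)).2
      have hle : b n * uu b y s n ≤ b n * ((s - Cc b y n + (b n - 1)) / b n) :=
        Nat.mul_le_mul_left _ (min_le_right _ _)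
      omega

lemma core (n : ℕ) (b y : ℕ → ℕ) (hb : ∀ j, j < n → 0 < b j) (c X : ℕ) (hc : 0 < c)
    (hX : (∑ j ∈ Finset.range n, b j) < X)
    (hT : c * X ≤ ∑ j ∈ Finset.range n, b j * y j) :
    ∃ d : ℕ, ∃ y' : ℕ → ℕ, 0 < d ∧ d ≤ ∑ j ∈ Finset.range n, b j ∧
      (∀ j, y' j ≤ y j) ∧ ∑ j ∈ Finset.range n, b j * y' j = c * d := by
  have hT' : c * X ≤ Cc b y n := hT
  have hXpos : 0 < X := by omega
  have hTpos : 0 < Cc b y n := lt_of_lt_of_le (Nat.mul_pos hc hXpos) hT'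
  have hBpos : 0 < ∑ j ∈ Finset.range n, b j := by
    rcases Nat.eq_zero_or_pos n with hn | hn
    · exfalso; rw [hn] at hTpos; simp [Cc] at hTpos
    · exact lt_of_lt_of_le (hb 0 hn)
        (Finset.single_le_sum (fun _ _ => Nat.zero_le _) (Finset.mem_range.2 hn))
  set B := ∑ j ∈ Finset.range n, b j with hB
  have hsle : ∀ t, t ≤ B → t * c ≤ Cc b y n := by
    intro t ht
    calc t * c ≤ X * c := Nat.mul_le_mul_right c (by omega)
      _ = c * X := mul_comm _ _
      _ ≤ _ := hT'
  have hmaps : ∀ t ∈ Finset.range (B+1),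
      (fun t => (∑ j ∈ Finset.range n, b j * uu b y (t*c) j) - t*c) t ∈ Finset.range B := by
    intro t ht
    simp only [Finset.mem_range] at ht ⊢
    have h1 := uu_upper b y n (t*c) hb
    omega
  obtain ⟨t1, ht1, t2, ht2, hne, heq⟩ :=
    Finset.exists_ne_map_eq_of_card_lt_of_maps_to
      (by simp) hmaps
  simp only [Finset.mem_range] at ht1 ht2
  wlog hlt : t1 < t2 generalizing t1 t2
  · exact this t2 t1 hne.symm heq.symm ht2 ht1 (by omega)
  have hlow1 := uu_lower b y n (t1*c) hb (hsle t1 (by omega))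
  have hlow2 := uu_lower b y n (t2*c) hb (hsle t2 (by omega))
  have hmono : ∀ j, uu b y (t1*c) j ≤ uu b y (t2*c) j :=
    fun j => uu_mono b y (Nat.mul_le_mul_right c (le_of_lt hlt)) j
  refine ⟨t2 - t1, fun j => uu b y (t2*c) j - uu b y (t1*c) j, by omega, by omega,
    fun j => le_trans (Nat.sub_le _ _) (uu_le b y _ j), ?_⟩
  have hsplit : (∑ j ∈ Finset.range n, b j * (uu b y (t2*c) j - uu b y (t1*c) j))
      + ∑ j ∈ Finset.range n, b j * uu b y (t1*c) j
      = ∑ j ∈ Finset.range n, b j * uu b y (t2*c) j := by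
    rw [← Finset.sum_add_distrib]
    exact Finset.sum_congr rfl (fun j _ => by
      rw [← Nat.mul_add, Nat.sub_add_cancel (hmono j)])
  have hgoal : c * (t2 - t1) = t2 * c - t1 * c := by
    rw [mul_comm c, Nat.sub_mul]
  show (∑ j ∈ Finset.range n, b j * (uu b y (t2*c) j - uu b y (t1*c) j)) = c * (t2 - t1)
  rw [hgoal]
  omega

lemma bound (n : ℕ) (b y : Fin n → ℕ) (hb : ∀ j, 0 < b j) (c X : ℕ) (hc : 0 < c)
    (hX : ∑ j, b j < X) (hT : c * X ≤ ∑ j, b j * y j) :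
    ∃ d : ℕ, ∃ y' : Fin n → ℕ, 0 < d ∧ d ≤ ∑ j, b j ∧ (∀ j, y' j ≤ y j) ∧
      ∑ j, b j * y' j = c * d := by
  set be : ℕ → ℕ := fun j => if h : j < n then b ⟨j, h⟩ else 0 with hbe
  set ye : ℕ → ℕ := fun j => if h : j < n then y ⟨j, h⟩ else 0 with hye
  have hb1 : (∑ j, b j) = ∑ j ∈ Finset.range n, be j := by
    rw [← Fin.sum_univ_eq_sum_range]
    exact Finset.sum_congr rfl (fun i _ => by simp [hbe, i.isLt])
  have hby : (∑ j, b j * y j) = ∑ j ∈ Finset.range n, be j * ye j := by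
    rw [← Fin.sum_univ_eq_sum_range]
    exact Finset.sum_congr rfl (fun i _ => by simp [hbe, hye, i.isLt])
  obtain ⟨d, y0, hd, hdB, hy0, heq⟩ := core n be ye
    (fun j hj => by simp [hbe, hj]; exact hb _) c X hc (by omega) (by omega)
  refine ⟨d, fun j => y0 j, hd, by omega, ?_, ?_⟩
  · intro j
    have := hy0 j.val
    simpa [hye, j.isLt] using this
  · rw [← heq, ← Fin.sum_univ_eq_sum_range (fun j => be j * y0 j)]
    exact Finset.sum_congr rfl (fun i _ => by simp [hbe, i.isLt])

/-- Bounds on minimal solutions of a single homogeneous equation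
`∑ a i * x i = ∑ b j * y j` with positive coefficients. -/
theorem stmt_4 (m n : ℕ) (a : Fin m → ℕ) (b : Fin n → ℕ)
    (ha : ∀ i, 0 < a i) (hb : ∀ j, 0 < b j)
    (x : Fin m → ℕ) (y : Fin n → ℕ)
    (hsol : ∑ i, a i * x i = ∑ j, b j * y j)
    (hne : (x, y) ≠ 0)
    (hmin : ¬∃ p : (Fin m → ℕ) × (Fin n → ℕ),
      (∑ i, a i * p.1 i = ∑ j, b j * p.2 j) ∧ p ≠ 0 ∧ p ≤ (x, y) ∧ p ≠ (x, y)) :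
    (∀ i, x i ≤ ∑ j, b j) ∧ (∀ j, y j ≤ ∑ i, a i) := by
  constructor
  · intro k
    by_contra hk
    push_neg at hk
    have hT : a k * x k ≤ ∑ j, b j * y j := by
      rw [← hsol]
      exact Finset.single_le_sum (f := fun i => a i * x i)
        (fun _ _ => Nat.zero_le _) (Finset.mem_univ k)
    obtain ⟨d, y', hd, hdB, hy', heq⟩ := bound n b y hb (a k) (x k) (ha k) hk hT
    apply hmin
    refine ⟨⟨fun i => if i = k then d else 0, y'⟩, ?_, ?_, ?_, ?_⟩
    · show (∑ i, a i * if i = k then d else 0) = ∑ j, b j * y' j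
      rw [heq]
      rw [Finset.sum_congr rfl (fun i _ => mul_ite (i = k) (a i) d 0)]
      simp [Finset.sum_ite_eq']
    · intro h0
      have := congrArg (fun q => q.1 k) h0
      simp at this
      omega
    · refine ⟨fun i => ?_, fun j => hy' j⟩
      by_cases hik : i = k
      · simp [hik]; omega
      · simp [hik]
    · intro h0
      have := congrArg (fun q => q.1 k) h0
      simp at this
      omega
  · intro k
    by_contra hk
    push_neg at hk
    have hT : b k * y k ≤ ∑ i, a i * x i := by
      rw [hsol]
      exact Finset.single_le_sum (f := fun j => b j * y j)
        (fun _ _ => Nat.zero_le _) (Finset.mem_univ k)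
    obtain ⟨d, x', hd, hdA, hx', heq⟩ := bound m a x ha (b k) (y k) (hb k) hk hT
    apply hmin
    refine ⟨⟨x', fun j => if j = k then d else 0⟩, ?_, ?_, ?_, ?_⟩
    · show (∑ i, a i * x' i) = ∑ j, b j * if j = k then d else 0
      rw [heq]
      rw [Finset.sum_congr rfl (fun j _ => mul_ite (j = k) (b j) d 0)]
      simp [Finset.sum_ite_eq']
    · intro h0
      have := congrArg (fun q => q.2 k) h0
      simp at this
      omega
    · refine ⟨fun i => hx' i, fun j => ?_⟩
      by_cases hjk : j = k
      · simp [hjk]; omega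
      · simp [hjk]
    · intro h0
      have := congrArg (fun q => q.2 k) h0
      simp at this
      omega
end

section
/- Let S ⊆ N^k be the set of nonnegative integer solutions of a system of finitely many linear Diophantine inequalities a_{i1}x_1 + ... + a_{ik}x_k + a_i ≥ 0 (i=1,...,m) with integer coefficients a_{ij}, a_i. Then the characteristic series χ_S(t_1,...,t_k) = Σ_{s∈S} t_1^{s_1}...t_k^{s_k} is a nice rational function. -/
open scoped Classical

noncomputable def charSeries (k : ℕ) (S : Set (Fin k → ℕ)) :
    MvPowerSeries (Fin k) ℚ :=
  fun b => if (fun j => b j) ∈ S then 1 else 0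

/-!
By Gordan's lemma the nonnegative solutions of the homogeneous system form the monoid `⟨G⟩`
generated by a finite set `G` of nonzero vectors, and by Dickson's lemma the solution set is
`F + ⟨G⟩` with `F` finite. For a `⟨G⟩`-stable set `T` and `X = (F + ⟨G⟩) \ T`, multiplying the
characteristic series of `X` by `1 - t^g` gives `χ (X \ (g + X)) - t^g χ {x ∈ X | g + x ∉ X}`,
and both sets are again of the form `(F' + ⟨G \ {g}⟩) \ T'` with `F'` finite (by Dickson's lemma
for the second one). Induction on `G` shows that `χ X * ∏ g ∈ G, (1 - t^g)` is a polynomial.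
-/

open Pointwise

theorem exists_finset_subset_forall_exists_le {α : Type*} [PartialOrder α]
    [WellQuasiOrderedLE α] (s : Set α) : ∃ t : Finset α, ↑t ⊆ s ∧ ∀ x ∈ s, ∃ y ∈ t, y ≤ x := by
  have hpwo := Set.isPWO_of_wellQuasiOrderedLE s
  have hfin : {x | Minimal (· ∈ s) x}.Finite :=
    (setOfPred_minimal_antichain _).finite_of_partiallyWellOrderedOn
      (hpwo.mono (setOfPred_minimal_subset _))
  refine ⟨hfin.toFinset, fun x hx => (hfin.mem_toFinset.1 hx).prop, fun x hx => ?_⟩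
  obtain ⟨y, hyx, hy⟩ := hpwo.exists_le_minimal hx
  exact ⟨y, hfin.mem_toFinset.2 hy, hyx⟩

namespace Set

variable {α β : Type*}

theorem sdiff_sdiff_vadd_sdiff [VAdd α β] {S T : Set β} {g : α} (hT : g +ᵥ T ⊆ T) :
    (S \ T) \ (g +ᵥ (S \ T)) = S \ (T ∪ (g +ᵥ S)) := by
  ext x
  simp only [mem_sdiff, mem_union, mem_vadd_set, not_or, not_exists, not_and]
  constructor
  · rintro ⟨⟨hxS, hxT⟩, hx⟩
    refine ⟨hxS, hxT, fun y hyS hyx => ?_⟩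
    by_cases hyT : y ∈ T
    · exact hxT (hyx ▸ hT ⟨y, hyT, rfl⟩)
    · exact hx y ⟨hyS, hyT⟩ hyx
  · rintro ⟨hxS, hxT, hx⟩
    exact ⟨⟨hxS, hxT⟩, fun y hy => hx y hy.1⟩

theorem sep_add_notMem_sdiff [Add α] {S T : Set α} {g : α} (hS : g +ᵥ S ⊆ S) :
    {x ∈ S \ T | g + x ∉ S \ T} = {x ∈ S | g + x ∈ T} \ T := by
  ext x
  simp only [mem_sdiff, mem_ofPred_eq, not_and, not_not]
  exact ⟨fun ⟨⟨hxS, hxT⟩, hx⟩ => ⟨⟨hxS, hx (hS ⟨x, hxS, rfl⟩)⟩, hxT⟩,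
    fun ⟨⟨hxS, hx⟩, hxT⟩ => ⟨⟨hxS, hxT⟩, fun _ => hx⟩⟩

end Set

namespace AddSubmonoid

section AddCommMonoid

variable {M : Type*} [AddCommMonoid M]

theorem mem_closure_insert {g x : M} {s : Set M} :
    x ∈ closure (insert g s) ↔ ∃ n : ℕ, ∃ m ∈ closure s, n • g + m = x := by
  rw [Set.insert_eq, closure_union, mem_sup]
  simp [mem_closure_singleton]

theorem vadd_add_closure_insert_subset {F s : Set M} {g : M} :
    g +ᵥ (F + closure (insert g s)) ⊆ F + closure (insert g s) := by
  rintro _ ⟨_, ⟨f, hf, m, hm, rfl⟩, rfl⟩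
  exact ⟨f, hf, g + m, add_mem (subset_closure (Set.mem_insert _ _)) hm, add_left_comm _ _ _⟩

theorem add_closure_insert_sdiff_eq {F T s : Set M} {g : M}
    (hT : g +ᵥ (F + closure (insert g s)) ⊆ T) :
    (F + closure (insert g s)) \ T = (F + closure s) \ T := by
  ext x
  constructor
  · rintro ⟨⟨f, hf, m, hm, rfl⟩, hx⟩
    obtain ⟨n, m', hm', rfl⟩ := mem_closure_insert.1 hm
    cases n with
    | zero => exact ⟨⟨f, hf, m', hm', by simp⟩, hx⟩
    | succ n =>
      refine absurd (hT ⟨f + (n • g + m'), ⟨f, hf, n • g + m', ?_, rfl⟩, ?_⟩) hx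
      · exact add_mem (nsmul_mem (subset_closure (Set.mem_insert _ _)) _)
          (closure_mono (Set.subset_insert _ _) hm')
      · simp only [vadd_eq_add, succ_nsmul]; abel
  · rintro ⟨hx, hxT⟩
    exact ⟨Set.add_subset_add_left (closure_mono (Set.subset_insert _ _)) hx, hxT⟩

theorem sdiff_sdiff_vadd_add_closure_insert {F T s : Set M} {g : M}
    (hT : T + closure (insert g s) ⊆ T) :
    ((F + closure (insert g s)) \ T) \ (g +ᵥ ((F + closure (insert g s)) \ T)) =
      (F + closure s) \ (T ∪ (g +ᵥ (F + closure (insert g s)))) := by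
  have hgT : g +ᵥ T ⊆ T := by
    rintro _ ⟨t, ht, rfl⟩
    show g + t ∈ T
    rw [add_comm]
    exact hT ⟨t, ht, g, subset_closure (Set.mem_insert _ _), rfl⟩
  rw [Set.sdiff_sdiff_vadd_sdiff hgT, add_closure_insert_sdiff_eq Set.subset_union_right]

theorem exists_finset_subset_subset_add_closure {F G : Finset M} {U : Set M}
    (hU : U ⊆ ↑F + ↑(closure (G : Set M))) :
    ∃ F' : Finset M, ↑F' ⊆ U ∧ U ⊆ ↑F' + ↑(closure (G : Set M)) := by
  set φ := Fintype.linearCombination ℕ (Subtype.val : G → M)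
  have mem_closure_iff_exists : ∀ m, m ∈ closure (G : Set M) ↔ ∃ ν, φ ν = m := fun m => by
    rw [← Submodule.span_nat_eq_addSubmonoidClosure, Submodule.mem_toAddSubmonoid,
      ← Subtype.range_coe (s := (G : Set M)), ← Fintype.range_linearCombination]
    rfl
  -- Dickson's lemma in `G → ℕ`, separately for each translate `f + ⟨G⟩`
  choose t ht using fun f => exists_finset_subset_forall_exists_le {ν : G → ℕ | f + φ ν ∈ U}
  refine ⟨F.biUnion fun f => (t f).image (f + φ ·), ?_, ?_⟩
  · intro x hx
    obtain ⟨f, -, hx⟩ := Finset.mem_biUnion.1 hx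
    obtain ⟨ν, hν, rfl⟩ := Finset.mem_image.1 hx
    exact (ht f).1 hν
  · intro u hu
    obtain ⟨f, hf, m, hm, rfl⟩ := hU hu
    obtain ⟨ν, rfl⟩ := (mem_closure_iff_exists m).1 hm
    obtain ⟨ν', hν', hle⟩ := (ht f).2 ν hu
    refine ⟨f + φ ν', Finset.mem_biUnion.2 ⟨f, hf, Finset.mem_image.2 ⟨ν', hν', rfl⟩⟩,
      φ (ν - ν'), (mem_closure_iff_exists _).2 ⟨_, rfl⟩, ?_⟩
    change f + φ ν' + φ (ν - ν') = f + φ ν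
    rw [add_assoc, ← map_add, add_tsub_cancel_of_le hle]

theorem exists_finset_sep_add_notMem_eq {F G : Finset M} {T : Set M} {g : M}
    (hT : T + closure (insert g (G : Set M)) ⊆ T) :
    ∃ F' : Finset M,
      {x ∈ (F + closure (insert g (G : Set M)) : Set M) \ T |
          g + x ∉ (F + closure (insert g (G : Set M)) : Set M) \ T} =
        (F' + closure (G : Set M) : Set M) \ T := by
  set C := closure (insert g (G : Set M))
  set U := {x ∈ (F + C : Set M) | g + x ∈ T}
  obtain ⟨F', hF'U, hUF'⟩ := exists_finset_subset_subset_add_closure (F := F) (G := insert g G)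
    (U := U) (by rw [Finset.coe_insert]; exact Set.sep_subset _ _)
  rw [Finset.coe_insert] at hUF'
  have hF'T : g +ᵥ (F' + C : Set M) ⊆ T := by
    rintro _ ⟨_, ⟨f', hf', m, hm, rfl⟩, rfl⟩
    show g + (f' + m) ∈ T
    rw [← add_assoc]
    exact hT ⟨_, (hF'U hf').2, m, hm, rfl⟩
  have hU : U = F' + C := by
    refine subset_antisymm hUF' ?_
    rintro _ ⟨f', hf', m, hm, rfl⟩
    obtain ⟨f, hf, m₀, hm₀, rfl⟩ := (hF'U hf').1
    exact ⟨⟨f, hf, m₀ + m, add_mem hm₀ hm, (add_assoc _ _ _).symm⟩,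
      hF'T ⟨_, ⟨_, hf', m, hm, rfl⟩, rfl⟩⟩
  refine ⟨F', ?_⟩
  rw [Set.sep_add_notMem_sdiff vadd_add_closure_insert_subset]
  change U \ T = _
  rw [hU, add_closure_insert_sdiff_eq hF'T]

end AddCommMonoid

section Nonneg

variable {σ ι : Type*} [Finite σ] [Finite ι]

theorem exists_finset_closure_eq_setOf_nonneg (A : (σ →₀ ℕ) →+ (ι → ℤ)) :
    ∃ G : Finset (σ →₀ ℕ), (closure (G : Set (σ →₀ ℕ)) : Set (σ →₀ ℕ)) = {x | 0 ≤ A x} := by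
  -- `{x | 0 ≤ A x}` is the projection of the equalizer of `(x, y) ↦ A x` and `(x, y) ↦ y`.
  let cast : (ι → ℕ) →+ (ι → ℤ) := (Nat.castAddMonoidHom ℤ).compLeft ι
  obtain ⟨G, hG⟩ := (fg_eqLocusM (A.comp (AddMonoidHom.fst _ (ι → ℕ)))
    (cast.comp (AddMonoidHom.snd (σ →₀ ℕ) _))).map (AddMonoidHom.fst _ _)
  refine ⟨G, Set.ext fun x => ?_⟩
  rw [SetLike.mem_coe, hG, mem_map]
  constructor
  · rintro ⟨⟨x, y⟩, hxy, rfl⟩ i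
    have hxy : A x i = y i := congrFun (AddMonoidHom.mem_eqLocusM.1 hxy) i
    simp [hxy]
  · intro hx
    refine ⟨(x, fun i => (A x i).toNat), ?_, rfl⟩
    ext i
    simp [cast, Int.toNat_of_nonneg (hx i)]

theorem exists_finset_setOf_nonneg_eq_add_closure (A : (σ →₀ ℕ) →+ (ι → ℤ)) (c : ι → ℤ) :
    ∃ F G : Finset (σ →₀ ℕ), (∀ g ∈ G, g ≠ 0) ∧
      {x | 0 ≤ A x + c} = ↑F + ↑(closure (G : Set (σ →₀ ℕ))) := by
  obtain ⟨G, hG⟩ := exists_finset_closure_eq_setOf_nonneg A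
  -- `F` consists of minimal points of the solution set, ordered by `x` and by the slack `A x + c`.
  obtain ⟨t, htZ, ht⟩ := exists_finset_subset_forall_exists_le
    {p : (σ →₀ ℕ) × (ι → ℕ) | ∀ i, A p.1 i + c i = p.2 i}
  have hG₀ : closure ↑(G.erase 0) = closure (G : Set (σ →₀ ℕ)) := by
    rw [← closure_insert_zero, Finset.coe_erase, Set.insert_sdiff_singleton, closure_insert_zero]
  refine ⟨t.image Prod.fst, G.erase 0, fun g hg => Finset.ne_of_mem_erase hg, ?_⟩
  rw [hG₀, hG]
  ext x
  constructor
  · intro hx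
    obtain ⟨⟨f, y⟩, hft, hle⟩ := ht (x, fun i => (A x i + c i).toNat)
      fun i => (Int.toNat_of_nonneg (hx i)).symm
    have hfx : f ≤ x := hle.1
    refine ⟨f, Finset.mem_image_of_mem _ hft, x - f, fun i => ?_, add_tsub_cancel_of_le hfx⟩
    have hA : A (x - f) i + A f i = A x i := by
      rw [← Pi.add_apply, ← map_add, tsub_add_cancel_of_le hfx]
    have hf := htZ hft i
    have hy := hle.2 i
    have hxi := hx i
    simp only [Pi.add_apply, Pi.zero_apply] at hf hy hxi ⊢
    omega
  · rintro ⟨f, hf, m, hm, rfl⟩ i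
    obtain ⟨⟨f, y⟩, hft, rfl⟩ := Finset.mem_image.1 hf
    have hf := htZ hft i
    have hm : 0 ≤ A m i := hm i
    simp only [map_add, Pi.add_apply, Pi.zero_apply] at hf hm ⊢
    omega

end Nonneg

end AddSubmonoid

namespace MvPowerSeries

variable {σ R : Type*}

section CommSemiring

variable [CommSemiring R]

variable (R) in
noncomputable def indicatorSeries (X : Set (σ →₀ ℕ)) : MvPowerSeries σ R :=
  fun d => if d ∈ X then 1 else 0

theorem coeff_indicatorSeries (X : Set (σ →₀ ℕ)) (d : σ →₀ ℕ) :
    coeff d (indicatorSeries R X) = if d ∈ X then 1 else 0 :=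
  rfl

theorem exists_indicatorSeries_eq_coe_of_finite {X : Set (σ →₀ ℕ)} (hX : X.Finite) :
    ∃ P : MvPolynomial σ R, indicatorSeries R X = P := by
  refine ⟨∑ d ∈ hX.toFinset, MvPolynomial.monomial d 1, ?_⟩
  ext d
  simp [coeff_indicatorSeries, MvPolynomial.coeff_sum, MvPolynomial.coeff_monomial]

theorem monomial_mul_indicatorSeries (g : σ →₀ ℕ) (X : Set (σ →₀ ℕ)) :
    monomial g 1 * indicatorSeries R X = indicatorSeries R (g +ᵥ X) := by
  ext d
  have hd : d ∈ g +ᵥ X ↔ g ≤ d ∧ d - g ∈ X := by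
    simp only [Set.mem_vadd_set, vadd_eq_add]
    constructor
    · rintro ⟨y, hy, rfl⟩
      simpa using hy
    · rintro ⟨hgd, hd⟩
      exact ⟨d - g, hd, add_tsub_cancel_of_le hgd⟩
  simp only [coeff_monomial_mul, coeff_indicatorSeries, one_mul, hd, ite_and]

end CommSemiring

variable [CommRing R]

theorem indicatorSeries_sub (A B : Set (σ →₀ ℕ)) :
    indicatorSeries R A - indicatorSeries R B =
      indicatorSeries R (A \ B) - indicatorSeries R (B \ A) := by
  ext d
  simp only [map_sub, coeff_indicatorSeries, Set.mem_sdiff]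
  split_ifs <;> simp_all

theorem indicatorSeries_mul_one_sub_monomial (X : Set (σ →₀ ℕ)) (g : σ →₀ ℕ) :
    indicatorSeries R X * (1 - monomial g 1) =
      indicatorSeries R (X \ (g +ᵥ X)) - monomial g 1 * indicatorSeries R {x ∈ X | g + x ∉ X} := by
  rw [mul_sub, mul_one, mul_comm, monomial_mul_indicatorSeries, monomial_mul_indicatorSeries,
    indicatorSeries_sub]
  congr 2
  ext x
  simp only [Set.mem_sdiff, Set.mem_vadd_set, Set.mem_ofPred_eq, vadd_eq_add]
  constructor
  · rintro ⟨⟨y, hy, rfl⟩, hx⟩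
    exact ⟨y, ⟨hy, hx⟩, rfl⟩
  · rintro ⟨y, ⟨hy, hgy⟩, rfl⟩
    exact ⟨⟨y, hy, rfl⟩, hgy⟩

theorem exists_indicatorSeries_add_closure_sdiff_mul_prod_eq_coe (G F : Finset (σ →₀ ℕ))
    (T : Set (σ →₀ ℕ)) (hT : T + AddSubmonoid.closure (G : Set (σ →₀ ℕ)) ⊆ T) :
    ∃ P : MvPolynomial σ R,
      indicatorSeries R ((F + AddSubmonoid.closure (G : Set (σ →₀ ℕ)) : Set (σ →₀ ℕ)) \ T) *
        ∏ g ∈ G, (1 - monomial g 1) = P := by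
  induction G using Finset.induction_on generalizing F T with
  | empty =>
    simpa [Set.add_singleton] using
      exists_indicatorSeries_eq_coe_of_finite (F.finite_toSet.sdiff (t := T))
  | insert g G hg ih =>
    rw [Finset.coe_insert] at hT ⊢
    have hGC : AddSubmonoid.closure (G : Set (σ →₀ ℕ)) ≤ AddSubmonoid.closure (insert g ↑G) :=
      AddSubmonoid.closure_mono (Set.subset_insert _ _)
    have hTG : T + AddSubmonoid.closure (G : Set (σ →₀ ℕ)) ⊆ T :=
      (Set.add_subset_add_left hGC).trans hT
    obtain ⟨P₁, hP₁⟩ := ih F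
        (T ∪ (g +ᵥ (F + AddSubmonoid.closure (insert g (G : Set (σ →₀ ℕ))) : Set (σ →₀ ℕ)))) <| by
      rintro _ ⟨t, ht | ⟨_, ⟨f, hf, m', hm', rfl⟩, rfl⟩, m, hm, rfl⟩
      · exact Or.inl (hTG ⟨t, ht, m, hm, rfl⟩)
      · exact Or.inr ⟨f + (m' + m), ⟨f, hf, m' + m, add_mem hm' (hGC hm), rfl⟩,
          by simp only [vadd_eq_add]; abel⟩
    obtain ⟨F', hF'⟩ := AddSubmonoid.exists_finset_sep_add_notMem_eq (F := F) hT
    obtain ⟨P₂, hP₂⟩ := ih F' T hTG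
    refine ⟨P₁ - MvPolynomial.monomial g 1 * P₂, ?_⟩
    rw [Finset.prod_insert hg, ← mul_assoc, indicatorSeries_mul_one_sub_monomial, sub_mul,
      mul_assoc, AddSubmonoid.sdiff_sdiff_vadd_add_closure_insert hT, hP₁, hF', hP₂,
      ← MvPolynomial.coe_monomial, ← MvPolynomial.coe_mul]
    exact (map_sub MvPolynomial.coeToMvPowerSeries.ringHom _ _).symm

end MvPowerSeries

/-- The characteristic series of the set of nonnegative integer solutions of a
system of linear Diophantine inequalities is a nice rational function. -/
theorem stmt_9 (m k : ℕ) (a : Fin m → Fin k → ℤ) (c : Fin m → ℤ) :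
    ∃ (n : ℕ) (α : Fin n → (Fin k → ℕ)) (P : MvPolynomial (Fin k) ℚ),
      (∀ i, α i ≠ 0) ∧
      charSeries k {x | ∀ i, 0 ≤ ∑ j, a i j * (x j : ℤ) + c i} *
        ∏ i : Fin n,
          (1 - MvPowerSeries.monomial (Finsupp.equivFunOnFinite.symm (α i)) (1 : ℚ))
      = (P : MvPowerSeries (Fin k) ℚ) := by
  let A : (Fin k →₀ ℕ) →+ (Fin m → ℤ) := AddMonoidHom.mk' (fun x i => ∑ j, a i j * (x j : ℤ))
    fun x y => by ext i; simp [mul_add, Finset.sum_add_distrib]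
  obtain ⟨F, G, hG, hS⟩ := AddSubmonoid.exists_finset_setOf_nonneg_eq_add_closure A c
  obtain ⟨P, hP⟩ := MvPowerSeries.exists_indicatorSeries_add_closure_sdiff_mul_prod_eq_coe
    (R := ℚ) G F ∅ (by simp)
  rw [Set.sdiff_empty, ← hS] at hP
  have hχ : charSeries k {x | ∀ i, 0 ≤ ∑ j, a i j * (x j : ℤ) + c i} =
      MvPowerSeries.indicatorSeries ℚ {x | 0 ≤ A x + c} := rfl
  refine ⟨G.card, fun i => G.equivFin.symm i, P, fun i h => hG _ (G.equivFin.symm i).2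
    (DFunLike.coe_injective h), ?_⟩
  simp only [Finsupp.equivFunOnFinite_symm_coe, hχ]
  rwa [← Finset.prod_coe_sort, ← Fintype.prod_equiv G.equivFin.symm _ _ fun _ => rfl] at hP
end

section
/- The set S of nonnegative integer solutions (x_3, x_6, y) of the system y ≥ 4x_3 + 5x_6 + 3 and y ≤ 3x_3 + 6x_6 - 1 is exactly { (0,4,23) + c_1·(0,1,5) + c_2·(0,1,6) + c_3·(1,1,9) : c_1, c_2, c_3 ∈ N }. -/
/-- The solutions of the transport problem of Robles-Pérez and Rosales. -/
theorem stmt_12 :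
    {p : ℕ × ℕ × ℕ |
        4 * (p.1 : ℤ) + 5 * p.2.1 + 3 ≤ p.2.2 ∧
        (p.2.2 : ℤ) ≤ 3 * p.1 + 6 * p.2.1 - 1}
      = {p | ∃ c₁ c₂ c₃ : ℕ,
          p = ((0, 4, 23) : ℕ × ℕ × ℕ) + c₁ • ((0, 1, 5) : ℕ × ℕ × ℕ)
            + c₂ • ((0, 1, 6) : ℕ × ℕ × ℕ) + c₃ • ((1, 1, 9) : ℕ × ℕ × ℕ)} := by
  ext ⟨a, b, y⟩
  simp only [Set.mem_setOf_eq, Prod.mk_add_mk, Prod.smul_mk, smul_eq_mul, Prod.mk.injEq]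
  constructor
  · rintro ⟨h1, h2⟩
    refine ⟨(b - 4 - a) - (y - (23 + 9 * a + 5 * (b - 4 - a))),
      y - (23 + 9 * a + 5 * (b - 4 - a)), a, ?_, ?_, ?_⟩ <;> omega
  · rintro ⟨c1, c2, c3, rfl, rfl, rfl⟩
    push_cast
    omega
end

section
/- For the set S of nonnegative integer solutions (x_3, x_6, y) of the system y ≥ 4x_3 + 5x_6 + 3 and y ≤ 3x_3 + 6x_6 - 1, the characteristic series Σ_{(r_3,r_6,n)∈S} x_3^{r_3} x_6^{r_6} y^n equals x_6^4 y^{23} / ((1 - x_6 y^5)(1 - x_6 y^6)(1 - x_3 x_6 y^9)) as formal power series in Q[[x_3, x_6, y]]. -/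
open scoped Classical

/-!
The solution set `S` is the translate `(0,4,23) + ℕ(0,1,5) + ℕ(0,1,6) + ℕ(1,1,9)`, each point
uniquely: `(a, b, n)` has coordinates `w = a`, `v = n - 4a - 5b - 3`, `u = 3a + 6b - 1 - n`.
Multiplying the characteristic series of a set closed under `+ d` by `1 - X^d` keeps exactly the
elements that are not a translate by `d` of another one, so the three factors peel off the
generators one at a time: `S ⊇ {u = 0} ⊇ {u = v = 0} ⊇ {(0,4,23)}`.
-/

namespace charSeries

variable {k : ℕ}

theorem coeff_apply (S : Set (Fin k → ℕ)) (e : Fin k →₀ ℕ) :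
    MvPowerSeries.coeff e (charSeries k S) = if ⇑e ∈ S then 1 else 0 :=
  rfl

theorem singleton_eq_monomial (c : Fin k →₀ ℕ) :
    charSeries k {⇑c} = MvPowerSeries.monomial c 1 := by
  ext e
  simp only [coeff_apply, MvPowerSeries.coeff_monomial, Set.mem_singleton_iff,
    DFunLike.coe_fn_eq]

theorem mul_one_sub_monomial {S T : Set (Fin k → ℕ)} (d : Fin k →₀ ℕ)
    (hS : ∀ x ∈ S, x + d ∈ S) (hT : ∀ x, x ∈ T ↔ x ∈ S ∧ (⇑d ≤ x → x - d ∉ S)) :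
    charSeries k S * (1 - MvPowerSeries.monomial d 1) = charSeries k T := by
  ext e
  rw [mul_sub, mul_one, map_sub, MvPowerSeries.coeff_mul_monomial, coeff_apply, coeff_apply,
    coeff_apply, mul_one]
  simp only [hT, ← Finsupp.coe_le_coe, Finsupp.coe_tsub]
  by_cases hde : ⇑d ≤ ⇑e
  · have hshift : ⇑e - ⇑d ∈ S → ⇑e ∈ S := fun h => by
      simpa [tsub_add_cancel_of_le hde] using hS _ h
    by_cases he : ⇑e ∈ S <;> by_cases hed : ⇑e - ⇑d ∈ S <;> simp_all
  · simp [hde]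

end charSeries

/-- The characteristic series of the solution set `S` of the transport system
is `x₆⁴ y²³ / ((1 - x₆y⁵)(1 - x₆y⁶)(1 - x₃x₆y⁹))`, as an identity in
`ℚ[[x₃, x₆, y]]` (variables indexed `0 ↦ x₃`, `1 ↦ x₆`, `2 ↦ y`). -/
theorem stmt_16 :
    charSeries 3 {x | 4 * ((x 0 : ℤ)) + 5 * (x 1) + 3 ≤ (x 2) ∧
        ((x 2 : ℤ)) ≤ 3 * (x 0) + 6 * (x 1) - 1} *
      ((1 - MvPowerSeries.monomial (R := ℚ) (Finsupp.equivFunOnFinite.symm ![0, 1, 5]) 1) *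
       (1 - MvPowerSeries.monomial (R := ℚ) (Finsupp.equivFunOnFinite.symm ![0, 1, 6]) 1) *
       (1 - MvPowerSeries.monomial (R := ℚ) (Finsupp.equivFunOnFinite.symm ![1, 1, 9]) 1))
    = MvPowerSeries.monomial (R := ℚ) (Finsupp.equivFunOnFinite.symm ![0, 4, 23]) 1 := by
  simp only [← mul_assoc]
  rw [charSeries.mul_one_sub_monomial (T := {x | 4 * x 0 + 5 * x 1 + 3 ≤ x 2 ∧
        x 2 + 1 = 3 * x 0 + 6 * x 1}),
    charSeries.mul_one_sub_monomial (T := {x | x 1 = x 0 + 4 ∧ x 2 = 9 * x 0 + 23}),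
    charSeries.mul_one_sub_monomial (T := {⇑(Finsupp.equivFunOnFinite.symm ![0, 4, 23])}),
    charSeries.singleton_eq_monomial]
  all_goals
    intro x
    simp only [Set.mem_ofPred_eq, Set.mem_singleton_iff, Finsupp.coe_equivFunOnFinite_symm,
      Pi.le_def, Pi.add_apply, Pi.sub_apply, funext_iff, Fin.forall_fin_succ, Fin.succ_zero_eq_one,
      Fin.succ_one_eq_two, Matrix.cons_val_zero, Matrix.cons_val_one, Matrix.cons_val,
      IsEmpty.forall_iff, and_true]
    omega
end
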